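/- arXiv:2205.13746 — 3 statements merged into one kernel-verified Lean document; each statement's English description precedes it below -/
import Mathlib

section
/- For any positive integer k̃ and any real a with 0 ≤ a ≤ 1, one has k̃^{1-a}·(k̃+1)^a − k̃^a·(k̃+1)^{1-a} ≤ 1. -/
namespace Real

lemma le_rpow_mul_rpow_of_le {x y a : ℝ} (hx : 0 ≤ x) (hxy : x ≤ y) (ha1 : a ≤ 1) :
    x ≤ x ^ a * y ^ (1 - a) :=
  calc x = x ^ a * x ^ (1 - a) := by
        rw [← rpow_add' hx (by norm_num), add_sub_cancel, rpow_one]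
    _ ≤ x ^ a * y ^ (1 - a) := by gcongr

/-- Weighted AM-GM bounds the first product by `x + a`, while the second is at least `x`. -/
lemma rpow_mul_add_one_rpow_sub_rpow_mul_add_one_rpow_le {x a : ℝ} (hx : 0 ≤ x) (ha0 : 0 ≤ a)
    (ha1 : a ≤ 1) : x ^ (1 - a) * (x + 1) ^ a - x ^ a * (x + 1) ^ (1 - a) ≤ a := by
  have amgm : x ^ (1 - a) * (x + 1) ^ a ≤ (1 - a) * x + a * (x + 1) :=
    geom_mean_le_arith_mean2_weighted (by linarith) ha0 hx (by linarith) (by ring)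
  have lower : x ≤ x ^ a * (x + 1) ^ (1 - a) :=
    le_rpow_mul_rpow_of_le hx (by linarith) ha1
  linarith

end Real

theorem key_power_ineq_general (k : ℕ) (a : ℝ) (ha0 : 0 ≤ a) (ha1 : a ≤ 1) :
    (k : ℝ) ^ (1 - a) * ((k : ℝ) + 1) ^ a - (k : ℝ) ^ a * ((k : ℝ) + 1) ^ (1 - a) ≤ 1 :=
  (Real.rpow_mul_add_one_rpow_sub_rpow_mul_add_one_rpow_le k.cast_nonneg ha0 ha1).trans ha1

theorem key_power_ineq (k : ℕ) (hk : 0 < k) (a : ℝ) (ha0 : 0 ≤ a) (ha1 : a ≤ 1) :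
    (k : ℝ) ^ (1 - a) * ((k : ℝ) + 1) ^ a - (k : ℝ) ^ a * ((k : ℝ) + 1) ^ (1 - a) ≤ 1 :=
  key_power_ineq_general k a ha0 ha1
end

section
/- Let C₁ > 0, L > 0, and set η = (C₁ + 2L)/(2C₁ + 2L). Let (τ_t) be defined by τ_{t+1} = η·τ_t with τ_0 > 0, and let (y_t) be a sequence of nonnegative reals satisfying y_0 ≤ C₁·τ_0 and y_{t+1} ≤ (1/2)·y_t + L·(τ_t − τ_{t+1}) for all t. Then y_t ≤ C₁·τ_t for all t ≥ 0. -/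
/-!
If `y t ≤ c τ t` then the recursion gives `y (t+1) ≤ (a c + b (1 - η)) τ t`, so the invariant
propagates as soon as `η` solves `a c + b (1 - η) = c η`. For `a = 1/2`, `c = C₁`, `b = L` this fixed
point equation is `C₁ / 2 + L = (C₁ + L) η`, whose solution is exactly `η = (C₁ + 2L)/(2C₁ + 2L)`.
-/

theorem le_mul_of_rec_le_of_fixed_point {a b c η : ℝ} {τ y : ℕ → ℝ} (ha : 0 ≤ a)
    (hfix : a * c + b * (1 - η) = c * η) (hτ : ∀ t, τ (t + 1) = η * τ t)
    (h0 : y 0 ≤ c * τ 0) (hrec : ∀ t, y (t + 1) ≤ a * y t + b * (τ t - τ (t + 1))) :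
    ∀ t, y t ≤ c * τ t := by
  intro t
  induction t with
  | zero => exact h0
  | succ t ih =>
    calc y (t + 1) ≤ a * y t + b * (τ t - τ (t + 1)) := hrec t
      _ ≤ a * (c * τ t) + b * (τ t - η * τ t) := by
        rw [hτ t]; gcongr
      _ = (a * c + b * (1 - η)) * τ t := by ring
      _ = c * τ (t + 1) := by rw [hfix, hτ t, mul_assoc]

theorem half_mul_add_mul_one_sub_eq_mul {C L : ℝ} (h : C + L ≠ 0) :
    1 / 2 * C + L * (1 - (C + 2 * L) / (2 * C + 2 * L)) = C * ((C + 2 * L) / (2 * C + 2 * L)) := by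
  have h2 : 2 * C + 2 * L ≠ 0 := by
    rw [← mul_add]; exact mul_ne_zero two_ne_zero h
  field_simp
  ring

theorem outer_loop_invariant_general (C₁ L : ℝ) (hC₁ : 0 < C₁) (hL : 0 < L)
    (τ y : ℕ → ℝ)
    (hτ : ∀ t, τ (t + 1) = (C₁ + 2 * L) / (2 * C₁ + 2 * L) * τ t)
    (hy0 : y 0 ≤ C₁ * τ 0)
    (hrec : ∀ t, y (t + 1) ≤ (1 / 2) * y t + L * (τ t - τ (t + 1))) :
    ∀ t, y t ≤ C₁ * τ t :=
  le_mul_of_rec_le_of_fixed_point one_half_pos.le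
    (half_mul_add_mul_one_sub_eq_mul (by positivity)) hτ hy0 hrec

theorem outer_loop_invariant (C₁ L : ℝ) (hC₁ : 0 < C₁) (hL : 0 < L)
    (τ y : ℕ → ℝ) (hτ0 : 0 < τ 0)
    (hτ : ∀ t, τ (t + 1) = (C₁ + 2 * L) / (2 * C₁ + 2 * L) * τ t)
    (hynn : ∀ t, 0 ≤ y t)
    (hy0 : y 0 ≤ C₁ * τ 0)
    (hrec : ∀ t, y (t + 1) ≤ (1 / 2) * y t + L * (τ t - τ (t + 1))) :
    ∀ t, y t ≤ C₁ * τ t :=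
  outer_loop_invariant_general C₁ L hC₁ hL τ y hτ hy0 hrec
end

section
/- Let D₁, C₁, D₂, τ₀, α₀ > 0 and h ≥ 1 satisfy τ₀ = (1/(D₁·α₀))·(1 + D₂/C₁). Suppose a nonnegative sequence (y_k) satisfies y_0 ≤ C₁·τ₀/h^{1/3} and y_{k+1} ≤ (1 − D₁·α₀·τ₀/(k+h))·(C₁·τ₀/(k+h)^{1/3}) + D₂·τ₀/(k+h)^{4/3} whenever y_k ≤ C₁·τ₀/(k+h)^{1/3}. Then y_k ≤ C₁·τ₀/(k+h)^{1/3} for all k ≥ 0. -/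
/-!
Induct on `k`, writing `x = k + h`. The choice of `τ₀` means `D₁ α₀ τ₀ = 1 + D₂ / C₁`, so the
noise term `D₂ τ₀ / x^{4/3}` is absorbed exactly by the contraction and the one-step bound collapses
to `C₁ τ₀ (x - 1) / x^{4/3}`; taking cube roots in `(x - 1)³ (x + 1) ≤ x⁴` bounds this by
`C₁ τ₀ / (x + 1)^{1/3}`.
-/

lemma sub_one_pow_three_mul_add_one_le_pow_four {x : ℝ} (hx : 0 ≤ x) :
    (x - 1) ^ 3 * (x + 1) ≤ x ^ 4 := by
  nlinarith [sq_nonneg (x - 1), sq_nonneg (x - 1 / 2), mul_nonneg hx (sq_nonneg (x - 1))]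

lemma rpow_four_thirds_eq_mul_rpow_one_third {x : ℝ} (hx : 0 ≤ x) :
    x ^ ((4 : ℝ) / 3) = x * x ^ ((1 : ℝ) / 3) := by
  rw [← Real.rpow_one_add' hx (by norm_num)]
  norm_num

lemma sub_one_div_rpow_four_thirds_le {x : ℝ} (hx : 1 ≤ x) :
    (x - 1) / x ^ ((4 : ℝ) / 3) ≤ 1 / (x + 1) ^ ((1 : ℝ) / 3) := by
  have hx₀ : 0 ≤ x - 1 := by linarith
  have hcube {a : ℝ} (ha : 0 ≤ a) (n : ℕ) : a ^ ((n : ℝ) / 3) = (a ^ n) ^ ((1 : ℝ) / 3) := by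
    rw [← Real.rpow_natCast, ← Real.rpow_mul ha, mul_one_div]
  have hroot : (x - 1) * (x + 1) ^ ((1 : ℝ) / 3) ≤ x ^ ((4 : ℝ) / 3) := by
    have h₁ := hcube hx₀ 3
    have h₄ := hcube (by linarith : 0 ≤ x) 4
    norm_num at h₁ h₄
    rw [h₁, h₄, ← Real.mul_rpow (by positivity) (by linarith)]
    exact Real.rpow_le_rpow (by positivity)
      (sub_one_pow_three_mul_add_one_le_pow_four (by linarith)) (by norm_num)
  rwa [div_le_div_iff₀ (by positivity) (by positivity), one_mul]

lemma contraction_step_eq {D₁ C₁ D₂ τ₀ α₀ x : ℝ} (hC₁ : C₁ ≠ 0) (hx : 0 < x)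
    (hτ : D₁ * α₀ * τ₀ = 1 + D₂ / C₁) :
    (1 - D₁ * α₀ * τ₀ / x) * (C₁ * τ₀ / x ^ ((1 : ℝ) / 3)) + D₂ * τ₀ / x ^ ((4 : ℝ) / 3) =
      C₁ * τ₀ * ((x - 1) / x ^ ((4 : ℝ) / 3)) := by
  have : 0 < x ^ ((1 : ℝ) / 3) := by positivity
  rw [hτ, rpow_four_thirds_eq_mul_rpow_one_third hx.le]
  field_simp
  ring

theorem rate_induction_general (D₁ C₁ D₂ τ₀ α₀ h : ℝ)
    (hD₁ : 0 < D₁) (hC₁ : 0 < C₁) (hτ₀ : 0 < τ₀) (hα₀ : 0 < α₀)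
    (hh : 1 ≤ h)
    (hτeq : τ₀ = (1 / (D₁ * α₀)) * (1 + D₂ / C₁))
    (y : ℕ → ℝ)
    (hy0 : y 0 ≤ C₁ * τ₀ / h ^ ((1 : ℝ) / 3))
    (hstep : ∀ k : ℕ, y k ≤ C₁ * τ₀ / ((k : ℝ) + h) ^ ((1 : ℝ) / 3) →
      y (k + 1) ≤ (1 - D₁ * α₀ * τ₀ / ((k : ℝ) + h)) *
          (C₁ * τ₀ / ((k : ℝ) + h) ^ ((1 : ℝ) / 3)) +
        D₂ * τ₀ / ((k : ℝ) + h) ^ ((4 : ℝ) / 3)) :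
    ∀ k : ℕ, y k ≤ C₁ * τ₀ / ((k : ℝ) + h) ^ ((1 : ℝ) / 3) := by
  have hτ : D₁ * α₀ * τ₀ = 1 + D₂ / C₁ := by
    rw [hτeq]
    field_simp
  intro k
  induction k with
  | zero => simpa using hy0
  | succ k ih =>
    have hx : 1 ≤ (k : ℝ) + h := by linarith [k.cast_nonneg (α := ℝ)]
    calc y (k + 1)
        ≤ C₁ * τ₀ * (((k : ℝ) + h - 1) / ((k : ℝ) + h) ^ ((4 : ℝ) / 3)) := by
          rw [← contraction_step_eq hC₁.ne' (by linarith) hτ]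
          exact hstep k ih
      _ ≤ C₁ * τ₀ * (1 / ((k : ℝ) + h + 1) ^ ((1 : ℝ) / 3)) :=
          mul_le_mul_of_nonneg_left (sub_one_div_rpow_four_thirds_le hx) (by positivity)
      _ = C₁ * τ₀ / (((k + 1 : ℕ) : ℝ) + h) ^ ((1 : ℝ) / 3) := by
          push_cast
          ring_nf

theorem rate_induction (D₁ C₁ D₂ τ₀ α₀ h : ℝ)
    (hD₁ : 0 < D₁) (hC₁ : 0 < C₁) (hD₂ : 0 < D₂) (hτ₀ : 0 < τ₀) (hα₀ : 0 < α₀)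
    (hh : 1 ≤ h)
    (hτeq : τ₀ = (1 / (D₁ * α₀)) * (1 + D₂ / C₁))
    (y : ℕ → ℝ) (hynn : ∀ k, 0 ≤ y k)
    (hy0 : y 0 ≤ C₁ * τ₀ / h ^ ((1 : ℝ) / 3))
    (hstep : ∀ k : ℕ, y k ≤ C₁ * τ₀ / ((k : ℝ) + h) ^ ((1 : ℝ) / 3) →
      y (k + 1) ≤ (1 - D₁ * α₀ * τ₀ / ((k : ℝ) + h)) *
          (C₁ * τ₀ / ((k : ℝ) + h) ^ ((1 : ℝ) / 3)) +
        D₂ * τ₀ / ((k : ℝ) + h) ^ ((4 : ℝ) / 3)) :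
    ∀ k : ℕ, y k ≤ C₁ * τ₀ / ((k : ℝ) + h) ^ ((1 : ℝ) / 3) :=
  rate_induction_general D₁ C₁ D₂ τ₀ α₀ h hD₁ hC₁ hτ₀ hα₀ hh hτeq y hy0 hstep
end
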